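/- arXiv:2401.15601 — 2 statements merged into one kernel-verified Lean document; each statement's English description precedes it below -/
import Mathlib

section
/- For all 1 ≤ p ≤ l ≤ K, assuming each rational number (ĉ_l^+, d_{(j)}·c_j)_{D_0R} (1 ≤ j ≤ l) is an integer: q^{(p)}(ŷ^{c_l^+}) = ŷ^{c_l^+}·∏_{j=1}^{p} L_j^{−(ĉ_l^+, d_{(j)}·c_j)_{D_0R}}. -/
/-!
The mutation `q_j` multiplies each `x_i` by a power of `P_j`, hence multiplies `ŷ^{c_l⁺}` by
`P_j^{-(ĉ_l⁺, d_{(j)} c_j)}`. Since `q^{(j-1)}` fixes the `z`'s and, inductively, sends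
`ŷ^{c_j⁺}` to the argument of `L_j`, it sends `P_j` to `L_j`, and the factors telescope into
the product formula. `L_j = q^{(j-1)}(P_j)` is nonzero because `P_j` is: after clearing the
`x`-denominators it becomes a polynomial taking the value `1` at `x = 1`, `y = z = 0`.
-/

noncomputable section

/-- Variables of the ambient field of a generalized cluster algebra of rank `n` with
mutation degrees `r`: cluster variables `x_i`, coefficients `y_i`, and `z_{i,s}` for
`1 ≤ s ≤ r_i - 1` (encoded by `Fin (r i - 1)`, the variable `z i t` standing for
`z_{i, t+1}`). -/
inductive GVar (n : ℕ) (r : Fin n → ℕ) : Type where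
  | x : Fin n → GVar n r
  | y : Fin n → GVar n r
  | z : (i : Fin n) → Fin (r i - 1) → GVar n r

/-- The ambient field: rational functions over `ℚ` in the variables `GVar n r`. -/
abbrev GF (n : ℕ) (r : Fin n → ℕ) : Type := FractionRing (MvPolynomial (GVar n r) ℚ)

/-- The variable `x_i` as an element of the field `GF n r`. -/
def Xv {n : ℕ} {r : Fin n → ℕ} (i : Fin n) : GF n r :=
  algebraMap (MvPolynomial (GVar n r) ℚ) (GF n r) (MvPolynomial.X (GVar.x i))

/-- The variable `y_i` as an element of the field `GF n r`. -/
def Yv {n : ℕ} {r : Fin n → ℕ} (i : Fin n) : GF n r :=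
  algebraMap (MvPolynomial (GVar n r) ℚ) (GF n r) (MvPolynomial.X (GVar.y i))

/-- The variable `z_{i,s+1}` (for `s : Fin (r i - 1)`) as an element of `GF n r`. -/
def Zv {n : ℕ} {r : Fin n → ℕ} (i : Fin n) (s : Fin (r i - 1)) : GF n r :=
  algebraMap (MvPolynomial (GVar n r) ℚ) (GF n r) (MvPolynomial.X (GVar.z i s))

/-- A rational constant as an element of `GF n r`. -/
def Qc {n : ℕ} {r : Fin n → ℕ} (a : ℚ) : GF n r :=
  algebraMap (MvPolynomial (GVar n r) ℚ) (GF n r) (MvPolynomial.C a)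

/-- `z_{i,s}` for `0 ≤ s ≤ r i`, with the convention `z_{i,0} = z_{i,r_i} = 1`. -/
def Zc {n : ℕ} (r : Fin n → ℕ) (i : Fin n) (s : ℕ) : GF n r :=
  if h : 0 < s ∧ s < r i then Zv i ⟨s - 1, by omega⟩ else 1

/-- `x^v = ∏ x_i^{v_i}` for `v ∈ ℤ^n`. -/
def xpow {n : ℕ} (r : Fin n → ℕ) (v : Fin n → ℤ) : GF n r :=
  ∏ i, Xv (r := r) i ^ v i

/-- `ŷ_i = y_i·∏_j x_j^{b_{ji}}`. -/
def yhat {n : ℕ} (r : Fin n → ℕ) (B : Matrix (Fin n) (Fin n) ℤ) (i : Fin n) : GF n r :=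
  Yv i * ∏ j, Xv (r := r) j ^ B j i

/-- `ŷ^v = ∏ ŷ_i^{v_i}` for `v ∈ ℤ^n`. -/
def yhatpow {n : ℕ} (r : Fin n → ℕ) (B : Matrix (Fin n) (Fin n) ℤ) (v : Fin n → ℤ) :
    GF n r :=
  ∏ i, yhat r B i ^ v i


open Finset
open scoped Matrix

theorem zpow_sum₀ {G₀ ι : Type*} [CommGroupWithZero G₀] {a : G₀} (ha : a ≠ 0) (s : Finset ι)
    (f : ι → ℤ) : a ^ (∑ i ∈ s, f i) = ∏ i ∈ s, a ^ f i := by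
  classical
  induction s using Finset.induction_on with
  | empty => simp
  | insert i s hi ih => rw [sum_insert hi, prod_insert hi, zpow_add₀ ha, ih]

theorem sum_algebraMap_mul_pow_ne_zero {A K S : Type*} [CommRing A] [CommRing K] [Algebra A K]
    [CommRing S] [Nontrivial S] (hinj : Function.Injective (algebraMap A K)) (φ : A →+* S)
    (z : ℕ → A) (hz : φ (z 0) = 1) {a b : A} (ha : φ a = 0) (hb : φ b = 1) {u : K}
    (hu : u * algebraMap A K b = algebraMap A K a) (R : ℕ) :
    ∑ s ∈ range (R + 1), algebraMap A K (z s) * u ^ s ≠ 0 := by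
  set f : A := ∑ s ∈ range (R + 1), z s * a ^ s * b ^ (R - s)
  have hf : (∑ s ∈ range (R + 1), algebraMap A K (z s) * u ^ s) * algebraMap A K b ^ R =
      algebraMap A K f := by
    rw [sum_mul, map_sum]
    refine sum_congr rfl fun s hs => ?_
    have hbR : algebraMap A K b ^ R = algebraMap A K b ^ s * algebraMap A K b ^ (R - s) := by
      rw [← pow_add, Nat.add_sub_cancel' (Nat.lt_succ_iff.mp (mem_range.mp hs))]
    rw [hbR, map_mul, map_mul, map_pow, map_pow, ← hu, mul_pow]
    ring
  have hφf : φ f = 1 := by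
    rw [map_sum, sum_eq_single_of_mem 0 (by simp)]
    · simp [hz, hb]
    · intro s _ hs
      simp [ha, zero_pow hs]
  intro h
  rw [h, zero_mul, ← map_zero (algebraMap A K)] at hf
  rw [← hinj hf, map_zero] at hφf
  exact zero_ne_one hφf

section
variable {n : ℕ} {r : Fin n → ℕ}

theorem Xv_ne_zero (i : Fin n) : (Xv i : GF n r) ≠ 0 :=
  (map_ne_zero_iff _ (IsFractionRing.injective _ _)).mpr (MvPolynomial.X_ne_zero _)

theorem xpow_add (u v : Fin n → ℤ) : xpow r (u + v) = xpow r u * xpow r v := by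
  simp only [xpow, Pi.add_apply, zpow_add₀ (Xv_ne_zero _), prod_mul_distrib]

theorem yhatpow_eq_mul_xpow (B : Matrix (Fin n) (Fin n) ℤ) (v : Fin n → ℤ) :
    yhatpow r B v = (∏ i, Yv i ^ v i) * xpow r (B *ᵥ v) := by
  have hx : ∀ i, (∏ j, Xv (r := r) j ^ B j i) ^ v i = ∏ j, Xv j ^ (B j i * v i) := fun i => by
    rw [← prod_zpow]
    exact prod_congr rfl fun j _ => (zpow_mul _ _ _).symm
  simp only [yhatpow, yhat, mul_zpow, hx, prod_mul_distrib, xpow]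
  rw [prod_comm]
  congr 1
  refine prod_congr rfl fun j _ => ?_
  rw [Matrix.mulVec, dotProduct, zpow_sum₀ (Xv_ne_zero j)]

theorem algebraMap_prod_X_pow (g : Fin n → GVar n r) (m : Fin n → ℕ) :
    algebraMap (MvPolynomial (GVar n r) ℚ) (GF n r) (∏ j, MvPolynomial.X (g j) ^ m j) =
      ∏ j, algebraMap (MvPolynomial (GVar n r) ℚ) (GF n r) (MvPolynomial.X (g j)) ^ (m j : ℤ) := by
  simp only [map_prod, map_pow, zpow_natCast]

def exchangePoly (r : Fin n → ℕ) (k : Fin n) (u : GF n r) : GF n r :=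
  ∑ s ∈ range (r k + 1), Zc r k s * u ^ s

theorem map_exchangePoly (f : GF n r →+* GF n r) {k : Fin n} (hf : ∀ s, f (Zc r k s) = Zc r k s)
    (u : GF n r) : f (exchangePoly r k u) = exchangePoly r k (f u) := by
  simp only [exchangePoly, map_sum, map_mul, map_pow, hf]

theorem map_Zc (f : GF n r →+* GF n r) (hf : ∀ i s, f (Zv i s) = Zv i s) (k : Fin n) (s : ℕ) :
    f (Zc r k s) = Zc r k s := by
  unfold Zc
  split
  · exact hf _ _
  · exact map_one f

def zPoly (r : Fin n → ℕ) (k : Fin n) (s : ℕ) : MvPolynomial (GVar n r) ℚ :=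
  if h : 0 < s ∧ s < r k then MvPolynomial.X (GVar.z k ⟨s - 1, by omega⟩) else 1

theorem Zc_eq_algebraMap_zPoly (k : Fin n) (s : ℕ) :
    Zc r k s = algebraMap (MvPolynomial (GVar n r) ℚ) (GF n r) (zPoly r k s) := by
  unfold Zc zPoly
  split
  · rfl
  · rw [map_one]

def xOnePoint (n : ℕ) (r : Fin n → ℕ) : GVar n r → ℚ
  | .x _ => 1
  | .y _ => 0
  | .z _ _ => 0

theorem exchangePoly_yhatpow_ne_zero (B : Matrix (Fin n) (Fin n) ℤ) (k : Fin n) {v : Fin n → ℤ}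
    (hv : ∀ i, 0 ≤ v i) (hv₀ : v ≠ 0) : exchangePoly r k (yhatpow r B v) ≠ 0 := by
  obtain ⟨i₀, hi₀⟩ : ∃ i, v i ≠ 0 := Function.ne_iff.mp hv₀
  set w := B *ᵥ v
  let a : MvPolynomial (GVar n r) ℚ := (∏ i, MvPolynomial.X (.y i) ^ (v i).toNat) *
    ∏ j, MvPolynomial.X (.x j) ^ (w j).toNat
  let b : MvPolynomial (GVar n r) ℚ := ∏ j, MvPolynomial.X (.x j) ^ (-w j).toNat
  have hu : yhatpow r B v * algebraMap _ _ b = algebraMap _ (GF n r) a := by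
    have hw : w + (fun j => ((-w j).toNat : ℤ)) = fun j => ((w j).toNat : ℤ) := by
      ext j; simp only [Pi.add_apply]; omega
    rw [yhatpow_eq_mul_xpow, map_mul, algebraMap_prod_X_pow, algebraMap_prod_X_pow,
      algebraMap_prod_X_pow, mul_assoc]
    congr 1
    · exact prod_congr rfl fun i _ => by rw [Int.toNat_of_nonneg (hv i)]; rfl
    · exact (xpow_add _ _).symm.trans (congrArg (xpow r) hw)
  have hz : MvPolynomial.eval (xOnePoint n r) (zPoly r k 0) = 1 := by simp [zPoly]
  have ha : MvPolynomial.eval (xOnePoint n r) a = 0 := by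
    have hpos : (v i₀).toNat ≠ 0 := by have := hv i₀; omega
    simp only [a, map_mul, map_prod, map_pow, MvPolynomial.eval_X, xOnePoint]
    rw [prod_eq_zero (mem_univ i₀) (zero_pow hpos), zero_mul]
  have hb : MvPolynomial.eval (xOnePoint n r) b = 1 := by simp [b, xOnePoint]
  simp only [exchangePoly, Zc_eq_algebraMap_zPoly]
  exact sum_algebraMap_mul_pow_ne_zero (IsFractionRing.injective _ _) _ _ hz ha hb hu _

theorem map_yhatpow_of_map_Xv (f : GF n r →+* GF n r) (hy : ∀ i, f (Yv i) = Yv i) {P : GF n r}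
    (hP : P ≠ 0) {h : Fin n → ℤ} (hx : ∀ i, f (Xv i) = Xv i * P ^ (-h i))
    (B : Matrix (Fin n) (Fin n) ℤ) (v : Fin n → ℤ) :
    f (yhatpow r B v) = yhatpow r B v * P ^ (-∑ m, (B *ᵥ v) m * h m) := by
  have hfx : ∀ m, f (Xv m ^ (B *ᵥ v) m) = Xv m ^ (B *ᵥ v) m * P ^ (-((B *ᵥ v) m * h m)) :=
    fun m => by rw [map_zpow₀, hx, mul_zpow, ← zpow_mul, neg_mul, mul_comm (h m)]
  rw [yhatpow_eq_mul_xpow, map_mul, xpow, map_prod, map_prod]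
  simp only [map_zpow₀, hy, hfx, prod_mul_distrib, ← sum_neg_distrib, zpow_sum₀ hP,
    mul_assoc]

end

theorem chain_apply_eq_self {R : Type*} [Semiring R] {K : ℕ} {q Q : ℕ → R →+* R}
    (hQ0 : Q 0 = RingHom.id R) (hQ : ∀ j < K, Q (j + 1) = (Q j).comp (q (j + 1)))
    {x : R} (hx : ∀ j < K, q (j + 1) x = x) : ∀ p ≤ K, Q p x = x := by
  intro p hp
  induction p with
  | zero => rw [hQ0, RingHom.id_apply]
  | succ p ih => rw [hQ p hp, RingHom.comp_apply, hx p hp, ih (by omega)]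

section Chain
variable {F : Type*} [Field F] {K : ℕ} {q Q : ℕ → F →+* F}

/-- `G j` plays the role of the exchange polynomial of the `j`-th mutation, `Y l` of `ŷ^{c_l⁺}`. -/
theorem chain_apply_eq_mul_prod (hQ0 : Q 0 = RingHom.id F)
    (hQ : ∀ j < K, Q (j + 1) = (Q j).comp (q (j + 1))) {G : ℕ → F → F} {Y L : ℕ → F}
    {e : ℕ → ℕ → ℤ} (hQG : ∀ j < K, ∀ y, Q j (G (j + 1) y) = G (j + 1) (Q j y))
    (hqY : ∀ j < K, ∀ l, j + 1 ≤ l → l ≤ K →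
      q (j + 1) (Y l) = Y l * G (j + 1) (Y (j + 1)) ^ (-e l (j + 1)))
    (hL : ∀ j < K, L (j + 1) = G (j + 1) (Y (j + 1) * ∏ i ∈ Icc 1 j, L i ^ (-e (j + 1) i))) :
    ∀ p ≤ K, ∀ l, p ≤ l → l ≤ K → Q p (Y l) = Y l * ∏ j ∈ Icc 1 p, L j ^ (-e l j) := by
  intro p hp
  induction p with
  | zero => intro l _ _; rw [hQ0, RingHom.id_apply, Icc_eq_empty (by omega), prod_empty, mul_one]
  | succ p ih =>
    intro l hpl hl
    have hQpG : Q p (G (p + 1) (Y (p + 1))) = L (p + 1) := by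
      rw [hQG p hp, ih (by omega) (p + 1) (by omega) (by omega), hL p hp]
    rw [hQ p hp, RingHom.comp_apply, hqY p hp l hpl hl, map_mul, map_zpow₀, hQpG,
      ih (by omega) l (by omega) hl, prod_Icc_succ_top (by omega), mul_assoc]

end Chain

theorem stmt_12_general (n K : ℕ) (r : Fin n → ℕ) (hr : ∀ i, 0 < r i)
    (B₀ : Matrix (Fin n) (Fin n) ℤ)
    (D₀ : Fin n → ℤ) (hD₀ : ∀ i, 0 < D₀ i)
    (idx : ℕ → Fin n) (ε : ℕ → ℤ)
    (hε : ∀ j < K, ε (j + 1) = 1 ∨ ε (j + 1) = -1)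
    (C : ℕ → Matrix (Fin n) (Fin n) ℤ)
    -- at each step the c-vector is nonzero and sign-coherent with common sign ε_j
    (hcv : ∀ j < K, (∃ l, C j l (idx (j + 1)) ≠ 0) ∧
      ∀ l, 0 ≤ ε (j + 1) * C j l (idx (j + 1)))
    -- the rational numbers h_{i,j} = (e_i, d_{(j)}·c_j)_{D₀R} are integers
    (hfun : ℕ → Fin n → ℤ)
    (hfunint : ∀ j < K, ∀ i,
      hfun (j + 1) i * (D₀ (idx (j + 1)) * (r (idx (j + 1)) : ℤ)) =
        D₀ i * (r i : ℤ) * C j i (idx (j + 1)))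
    (q : ℕ → (GF n r →+* GF n r))
    (hqy : ∀ j < K, ∀ i, q (j + 1) (Yv i) = Yv i)
    (hqz : ∀ j < K, ∀ i s, q (j + 1) (Zv i s) = Zv i s)
    (hqx : ∀ j < K, ∀ i, q (j + 1) (Xv i) =
      Xv i * (∑ s ∈ Finset.range (r (idx (j + 1)) + 1),
        Zc r (idx (j + 1)) s *
          yhatpow r B₀ (fun m => ε (j + 1) * C j m (idx (j + 1))) ^ s) ^ (-(hfun (j + 1) i)))
    (Q : ℕ → (GF n r →+* GF n r))
    (hQ0 : Q 0 = RingHom.id _)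
    (hQ : ∀ j < K, Q (j + 1) = (Q j).comp (q (j + 1)))
    -- the rational numbers (ĉ_l⁺, d_{(j)}·c_j)_{D₀R} are integers `e l j`
    (e : ℕ → ℕ → ℤ)
    (he : ∀ l, 1 ≤ l → l ≤ K → ∀ j, 1 ≤ j → j ≤ l →
      e l j * (D₀ (idx j) * (r (idx j) : ℤ)) =
        ∑ m, B₀.mulVec (fun i => ε l * C (l - 1) i (idx l)) m *
          (D₀ m * (r m : ℤ)) * C (j - 1) m (idx j))
    (L : ℕ → GF n r)
    (hL1 : L 1 = ∑ s ∈ Finset.range (r (idx 1) + 1),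
      Zc r (idx 1) s * yhatpow r B₀ (fun i => ε 1 * C 0 i (idx 1)) ^ s)
    (hLl : ∀ l, 2 ≤ l → l ≤ K → L l = ∑ s ∈ Finset.range (r (idx l) + 1),
      Zc r (idx l) s * (yhatpow r B₀ (fun i => ε l * C (l - 1) i (idx l)) *
        ∏ j ∈ Finset.Icc 1 (l - 1), L j ^ (-(e l j))) ^ s)
    : (∀ j, 1 ≤ j → j ≤ K → L j ≠ 0) ∧
    ∀ p l, 1 ≤ p → p ≤ l → l ≤ K →
      Q p (yhatpow r B₀ (fun i => ε l * C (l - 1) i (idx l))) =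
        yhatpow r B₀ (fun i => ε l * C (l - 1) i (idx l)) *
          ∏ j ∈ Finset.Icc 1 p, L j ^ (-(e l j)) := by
  set Y : ℕ → GF n r := fun l => yhatpow r B₀ (fun i => ε l * C (l - 1) i (idx l))
  have hQG : ∀ j < K, ∀ y, Q j (exchangePoly r (idx (j + 1)) y) =
      exchangePoly r (idx (j + 1)) (Q j y) := fun j hj =>
    map_exchangePoly _ fun s => chain_apply_eq_self hQ0 hQ
      (fun j' hj' => map_Zc _ (hqz j' hj') _ s) j hj.le
  have hP : ∀ j < K, exchangePoly r (idx (j + 1)) (Y (j + 1)) ≠ 0 := by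
    intro j hj
    obtain ⟨m, hm⟩ := (hcv j hj).1
    refine exchangePoly_yhatpow_ne_zero B₀ _ (hcv j hj).2 (Function.ne_iff.mpr ⟨m, ?_⟩)
    rcases hε j hj with h | h <;> simpa [h] using hm
  have hexp : ∀ j < K, ∀ l, j + 1 ≤ l → l ≤ K →
      ∑ m, (B₀ *ᵥ fun i => ε l * C (l - 1) i (idx l)) m * hfun (j + 1) m = e l (j + 1) := by
    intro j hj l hjl hl
    have hd : D₀ (idx (j + 1)) * (r (idx (j + 1)) : ℤ) ≠ 0 :=
      mul_ne_zero (hD₀ _).ne' (by exact_mod_cast (hr _).ne')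
    refine mul_right_cancel₀ hd ?_
    rw [sum_mul, he l (by omega) hl (j + 1) (by omega) hjl, Nat.add_sub_cancel]
    exact sum_congr rfl fun m _ => by linear_combination (B₀ *ᵥ _) m * hfunint j hj m
  have hqY : ∀ j < K, ∀ l, j + 1 ≤ l → l ≤ K →
      q (j + 1) (Y l) = Y l * exchangePoly r (idx (j + 1)) (Y (j + 1)) ^ (-e l (j + 1)) :=
    fun j hj l hjl hl => by
      rw [map_yhatpow_of_map_Xv _ (hqy j hj) (hP j hj) (hqx j hj), hexp j hj l hjl hl]
  have hL : ∀ j < K, L (j + 1) = exchangePoly r (idx (j + 1))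
      (Y (j + 1) * ∏ i ∈ Icc 1 j, L i ^ (-e (j + 1) i)) := by
    rintro (_ | j) hj
    · simp [hL1, exchangePoly, Y]
    · exact hLl (j + 2) (by omega) hj
  have hmain := chain_apply_eq_mul_prod (G := fun j => exchangePoly r (idx j)) (Y := Y) hQ0 hQ
    hQG hqY hL
  refine ⟨fun j _ hjK => ?_, fun p l _ hpl hlK => hmain p (by omega) l hpl hlK⟩
  obtain ⟨j, rfl⟩ : ∃ j', j = j' + 1 := ⟨j - 1, by omega⟩
  rw [hL j hjK, ← hmain j (by omega) (j + 1) (by omega) hjK, ← hQG j hjK]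
  exact (map_ne_zero_iff _ (Q j).injective).mpr (hP j hjK)

/-- For all `1 ≤ p ≤ l ≤ K`, the elements `L_j` are nonzero and
`q^{(p)}(ŷ^{c_l⁺}) = ŷ^{c_l⁺}·∏_{j=1}^{p} L_j^{-(ĉ_l⁺, d_{(j)}·c_j)_{D₀R}}`. -/
theorem stmt_12 (n K : ℕ) (hn : 1 ≤ n) (r : Fin n → ℕ) (hr : ∀ i, 0 < r i)
    (B₀ : Matrix (Fin n) (Fin n) ℤ)
    (D₀ : Fin n → ℤ) (hD₀ : ∀ i, 0 < D₀ i)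
    (hskew : ∀ i j, D₀ i * (r i : ℤ) * B₀ i j = -(D₀ j * (r j : ℤ) * B₀ j i))
    (idx : ℕ → Fin n) (ε : ℕ → ℤ)
    (hε : ∀ j < K, ε (j + 1) = 1 ∨ ε (j + 1) = -1)
    (B C : ℕ → Matrix (Fin n) (Fin n) ℤ)
    (hB0 : B 0 = B₀) (hC0 : C 0 = 1)
    -- at each step the c-vector is nonzero and sign-coherent with common sign ε_j
    (hcv : ∀ j < K, (∃ l, C j l (idx (j + 1)) ≠ 0) ∧
      ∀ l, 0 ≤ ε (j + 1) * C j l (idx (j + 1)))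
    (hB : ∀ j < K, ∀ (a b : Fin n),
      B (j + 1) a b =
        if a = idx (j + 1) ∨ b = idx (j + 1) then -(B j a b)
        else B j a b + (r (idx (j + 1)) : ℤ) *
          (max (-(B j a (idx (j + 1)))) 0 * B j (idx (j + 1)) b
            + B j a (idx (j + 1)) * max (B j (idx (j + 1)) b) 0))
    (hC : ∀ j < K, ∀ (a b : Fin n),
      C (j + 1) a b =
        if b = idx (j + 1) then -(C j a b)
        else C j a b + (r (idx (j + 1)) : ℤ) *
          (C j a (idx (j + 1)) * max (ε (j + 1) * B j (idx (j + 1)) b) 0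
            + max (-(ε (j + 1) * C j a (idx (j + 1)))) 0 * B j (idx (j + 1)) b))
    -- the rational numbers h_{i,j} = (e_i, d_{(j)}·c_j)_{D₀R} are integers
    (hfun : ℕ → Fin n → ℤ)
    (hfunint : ∀ j < K, ∀ i,
      hfun (j + 1) i * (D₀ (idx (j + 1)) * (r (idx (j + 1)) : ℤ)) =
        D₀ i * (r i : ℤ) * C j i (idx (j + 1)))
    (q : ℕ → (GF n r →+* GF n r))
    (hq0 : ∀ j < K, ∀ a : ℚ, q (j + 1) (Qc a) = Qc a)
    (hqy : ∀ j < K, ∀ i, q (j + 1) (Yv i) = Yv i)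
    (hqz : ∀ j < K, ∀ i s, q (j + 1) (Zv i s) = Zv i s)
    (hqx : ∀ j < K, ∀ i, q (j + 1) (Xv i) =
      Xv i * (∑ s ∈ Finset.range (r (idx (j + 1)) + 1),
        Zc r (idx (j + 1)) s *
          yhatpow r B₀ (fun m => ε (j + 1) * C j m (idx (j + 1))) ^ s) ^ (-(hfun (j + 1) i)))
    (Q : ℕ → (GF n r →+* GF n r))
    (hQ0 : Q 0 = RingHom.id _)
    (hQ : ∀ j < K, Q (j + 1) = (Q j).comp (q (j + 1)))
    -- the rational numbers (ĉ_l⁺, d_{(j)}·c_j)_{D₀R} are integers `e l j`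
    (e : ℕ → ℕ → ℤ)
    (he : ∀ l, 1 ≤ l → l ≤ K → ∀ j, 1 ≤ j → j ≤ l →
      e l j * (D₀ (idx j) * (r (idx j) : ℤ)) =
        ∑ m, B₀.mulVec (fun i => ε l * C (l - 1) i (idx l)) m *
          (D₀ m * (r m : ℤ)) * C (j - 1) m (idx j))
    (L : ℕ → GF n r)
    (hL1 : L 1 = ∑ s ∈ Finset.range (r (idx 1) + 1),
      Zc r (idx 1) s * yhatpow r B₀ (fun i => ε 1 * C 0 i (idx 1)) ^ s)
    (hLl : ∀ l, 2 ≤ l → l ≤ K → L l = ∑ s ∈ Finset.range (r (idx l) + 1),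
      Zc r (idx l) s * (yhatpow r B₀ (fun i => ε l * C (l - 1) i (idx l)) *
        ∏ j ∈ Finset.Icc 1 (l - 1), L j ^ (-(e l j))) ^ s)
    : (∀ j, 1 ≤ j → j ≤ K → L j ≠ 0) ∧
    ∀ p l, 1 ≤ p → p ≤ l → l ≤ K →
      Q p (yhatpow r B₀ (fun i => ε l * C (l - 1) i (idx l))) =
        yhatpow r B₀ (fun i => ε l * C (l - 1) i (idx l)) *
          ∏ j ∈ Finset.Icc 1 p, L j ^ (-(e l j)) :=
  stmt_12_general n K r hr B₀ D₀ hD₀ idx ε hε C hcv hfun hfunint q hqy hqz hqx Q hQ0 hQ e he L hL1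
    hLl
end
end

section
/- For every h ∈ ℤ and every N ∈ ℕ, the coefficient of X^N in P^h equals the sum, over all tuples (n_1,…,n_l) ∈ ℕ^l with ∑_{i=1}^l i·n_i = N, of C(h, n_1+⋯+n_l) · (n_1+⋯+n_l)!/(n_1!⋯n_l!) · ∏_{i=1}^l a_i^{n_i}. -/
/-!
Write `P = 1 + Q` with `Q = ∑ a_i X^i`. Since `X ∣ Q`, the binomial series `∑ₘ C(h,m) Qᵐ`
makes sense in `A⟦X⟧`, and by Vandermonde's identity `h ↦ ∑ₘ C(h,m) Qᵐ` is a homomorphism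
`ℤ → A⟦X⟧` sending `1` to `P`, so it is `h ↦ P^h`. Only `m ≤ N` contributes to the coefficient
of `X^N`, and the multinomial theorem expands the coefficient of `X^N` in `Qᵐ` as the sum over
the tuples `n` with `∑ nᵢ = m` and `∑ i·nᵢ = N`.
-/

/-- The generalized binomial coefficient `C(h,m) = h(h-1)⋯(h-m+1)/m!` for `h ∈ ℤ`
(the division is exact). -/
def intChoose (h : ℤ) (m : ℕ) : ℤ :=
  (∏ j ∈ Finset.range m, (h - (j : ℤ))) / (m.factorial : ℤ)

open Finset PowerSeries

lemma intChoose_eq_choose (h : ℤ) (m : ℕ) : intChoose h m = Ring.choose h m := by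
  rw [intChoose, ← descPochhammer_eval_eq_prod_range, Polynomial.eval_eq_smeval,
    Ring.descPochhammer_eq_factorial_smul_choose, nsmul_eq_mul,
    Int.mul_ediv_cancel_left _ (mod_cast m.factorial_ne_zero)]

namespace PowerSeries

variable {A : Type*} [CommRing A]

lemma coeff_pow_eq_zero_of_lt {Q : A⟦X⟧} (hQ : constantCoeff Q = 0) {m N : ℕ} (h : N < m) :
    coeff N (Q ^ m) = 0 :=
  X_pow_dvd_iff.mp (pow_dvd_pow_of_dvd (X_dvd_iff.mpr hQ) m) N h

lemma coeff_subst_eq_sum_range {R : Type*} [CommRing R] [Algebra R A] {Q : A⟦X⟧}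
    (hQ : constantCoeff Q = 0) (f : R⟦X⟧) (N : ℕ) :
    coeff N (f.subst Q) = ∑ d ∈ range (N + 1), coeff d f • coeff N (Q ^ d) := by
  rw [coeff_subst' (HasSubst.of_constantCoeff_zero' hQ)]
  refine finsum_eq_finsetSum_of_support_subset _ fun d hd => ?_
  by_contra hd'
  rw [coe_range, Set.mem_Iio, not_lt] at hd'
  exact hd (by simp only [coeff_pow_eq_zero_of_lt hQ (by omega : N < d), smul_zero])

noncomputable def binomialSeriesHom (R : Type*) [CommRing R] [BinomialRing R] (B : Type*)
    [Ring B] [Algebra R B] : Multiplicative R →* B⟦X⟧ where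
  toFun r := binomialSeries B r.toAdd
  map_one' := binomialSeries_zero
  map_mul' r s := binomialSeries_add r.toAdd s.toAdd

theorem val_zpow_eq_subst_binomialSeries {Q : A⟦X⟧} (hQ : constantCoeff Q = 0) (u : A⟦X⟧ˣ)
    (hu : (u : A⟦X⟧) = 1 + Q) (h : ℤ) :
    ((u ^ h : A⟦X⟧ˣ) : A⟦X⟧) = (binomialSeries ℤ h).subst Q := by
  have hsubst := HasSubst.of_constantCoeff_zero' hQ
  let F : Multiplicative ℤ →* A⟦X⟧ :=
    (substAlgHom hsubst).toMonoidHom.comp (binomialSeriesHom ℤ ℤ)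
  have hF : F.toHomUnits = zpowersHom _ u := MonoidHom.ext_mint <| Units.ext <| by
    have binomialSeries_one : binomialSeries ℤ (1 : ℤ) = 1 + X := by
      simpa using binomialSeries_nat (A := ℤ) 1
    simp [F, binomialSeriesHom, binomialSeries_one, substAlgHom_X, hu]
  simpa [F, binomialSeriesHom, coe_substAlgHom] using congr(($hF (.ofAdd h) : A⟦X⟧)).symm

lemma coeff_sum_C_mul_X_pow_pow {ι : Type*} [DecidableEq ι] (s : Finset ι) (a : ι → A)
    (w : ι → ℕ) (d N : ℕ) :
    coeff N ((∑ i ∈ s, C (a i) * X ^ w i) ^ d) =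
      ∑ k ∈ (piAntidiag s d).filter (fun k => ∑ i ∈ s, w i * k i = N),
        (Nat.multinomial s k : A) * ∏ i ∈ s, a i ^ k i := by
  have hterm (k : ι → ℕ) : ∏ i ∈ s, (C (a i) * X ^ w i) ^ k i =
      C (∏ i ∈ s, a i ^ k i) * X ^ (∑ i ∈ s, w i * k i) := by
    simp only [mul_pow, ← map_pow, ← pow_mul, prod_mul_distrib, map_prod, prod_pow_eq_pow_sum]
  rw [sum_pow_eq_sum_piAntidiag, map_sum, sum_filter]
  refine sum_congr rfl fun k _ => ?_
  rw [hterm, ← map_natCast (C (R := A)), ← mul_assoc, ← map_mul, coeff_C_mul_X_pow]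
  simp [eq_comm]

end PowerSeries

lemma sum_range_sum_piAntidiag_eq_sum_fin {ι M : Type*} [Fintype ι] [DecidableEq ι]
    [AddCommMonoid M] (w : ι → ℕ) (hw : ∀ i, 1 ≤ w i) (N : ℕ) (F : (ι → ℕ) → M) :
    ∑ d ∈ range (N + 1), ∑ k ∈ (piAntidiag univ d).filter (fun k => ∑ i, w i * k i = N), F k =
      ∑ f ∈ univ.filter (fun f : ι → Fin (N + 1) => ∑ i, w i * (f i : ℕ) = N),
        F (fun i => f i) := by
  have le_weight (k : ι → ℕ) (i : ι) : k i ≤ ∑ j, w j * k j :=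
    (Nat.le_mul_of_pos_left _ (hw i)).trans
      (single_le_sum (f := fun j => w j * k j) (fun j _ => Nat.zero_le _) (mem_univ i))
  have sum_le_weight (k : ι → ℕ) : ∑ i, k i ≤ ∑ i, w i * k i :=
    sum_le_sum fun i _ => Nat.le_mul_of_pos_left _ (hw i)
  symm
  rw [← sum_fiberwise_of_maps_to (g := fun f : ι → Fin (N + 1) => ∑ i, (f i : ℕ))
    (t := range (N + 1)) fun f hf => by
      simp only [mem_filter, mem_univ, true_and] at hf
      exact mem_range.2 (Nat.lt_succ_of_le ((sum_le_weight _).trans_eq hf))]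
  refine sum_congr rfl fun d _ => ?_
  rw [filter_filter]
  refine sum_bij (fun f _ i => f i) ?_ ?_ ?_ fun _ _ => rfl
  · intro f hf
    simp only [mem_filter, mem_univ, true_and] at hf
    simp [hf.1, hf.2]
  · intro f _ g _ hfg
    funext i
    exact Fin.ext (congr_fun hfg i)
  · intro k hk
    simp only [mem_filter, mem_piAntidiag, mem_univ] at hk
    refine ⟨fun i => ⟨k i, Nat.lt_succ_of_le ((le_weight k i).trans_eq hk.2)⟩, ?_, rfl⟩
    simp [hk.1.1, hk.2]

-- The tuples `n` have all `nᵢ ≤ N`, so they are encoded as functions `Fin l → Fin (N+1)`.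
theorem stmt_15_general (A : Type*) [CommRing A] (l : ℕ) (a : Fin l → A)
    (u : (PowerSeries A)ˣ)
    (hu : (u : PowerSeries A) =
      1 + ∑ i : Fin l, PowerSeries.C (a i) * (PowerSeries.X : PowerSeries A) ^ ((i : ℕ) + 1)) :
    ∀ (h : ℤ) (N : ℕ),
      PowerSeries.coeff N ((u ^ h : (PowerSeries A)ˣ) : PowerSeries A) =
        ∑ f ∈ Finset.univ.filter
            (fun f : Fin l → Fin (N + 1) => ∑ i : Fin l, ((i : ℕ) + 1) * (f i : ℕ) = N),
          (intChoose h (∑ i : Fin l, (f i : ℕ)) : A) *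
            (Nat.multinomial Finset.univ (fun i => (f i : ℕ)) : A) *
            ∏ i : Fin l, a i ^ (f i : ℕ) := by
  intro h N
  have hQ : constantCoeff (∑ i : Fin l, C (a i) * (X : A⟦X⟧) ^ ((i : ℕ) + 1)) = 0 := by simp
  rw [val_zpow_eq_subst_binomialSeries hQ u hu h, coeff_subst_eq_sum_range hQ]
  simp only [binomialSeries_coeff, coeff_sum_C_mul_X_pow_pow, intChoose_eq_choose]
  rw [← sum_range_sum_piAntidiag_eq_sum_fin (fun i : Fin l => (i : ℕ) + 1)
    (fun _ => Nat.le_add_left 1 _) N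
    fun k => ((Ring.choose h (∑ i, k i) : ℤ) : A) * Nat.multinomial univ k * ∏ i, a i ^ k i]
  refine sum_congr rfl fun d _ => ?_
  rw [smul_sum]
  refine sum_congr rfl fun k hk => ?_
  rw [(mem_piAntidiag.1 (mem_filter.1 hk).1).1]
  simp [mul_assoc]

/-- Let `A` be a commutative ring and
`P = 1 + ∑_{i=1}^{l} a_i·X^i ∈ A[[X]]` (a unit, since its constant term is `1`). Then for
every `h ∈ ℤ` and `N ∈ ℕ`, the coefficient of `X^N` in `P^h` equals the sum over all
tuples `(n_1,…,n_l) ∈ ℕ^l` with `∑ i·n_i = N` of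
`C(h, n_1+⋯+n_l)·(n_1+⋯+n_l)!/(n_1!⋯n_l!)·∏ a_i^{n_i}`. (Any such tuple has all
`n_i ≤ N`, so the tuples are encoded as functions `Fin l → Fin (N+1)`.) -/
theorem stmt_15 (A : Type*) [CommRing A] (l : ℕ) (hl : 1 ≤ l) (a : Fin l → A)
    (u : (PowerSeries A)ˣ)
    (hu : (u : PowerSeries A) =
      1 + ∑ i : Fin l, PowerSeries.C (a i) * (PowerSeries.X : PowerSeries A) ^ ((i : ℕ) + 1)) :
    ∀ (h : ℤ) (N : ℕ),
      PowerSeries.coeff N ((u ^ h : (PowerSeries A)ˣ) : PowerSeries A) =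
        ∑ f ∈ Finset.univ.filter
            (fun f : Fin l → Fin (N + 1) => ∑ i : Fin l, ((i : ℕ) + 1) * (f i : ℕ) = N),
          (intChoose h (∑ i : Fin l, (f i : ℕ)) : A) *
            (Nat.multinomial Finset.univ (fun i => (f i : ℕ)) : A) *
            ∏ i : Fin l, a i ^ (f i : ℕ) :=
  stmt_15_general A l a u hu
end
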